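/- arXiv:1403.5020 — 2 statements merged into one kernel-verified Lean document; each statement's English description precedes it below -/
import Mathlib

section
/- Finiteness of the entropy integrand for strictly suboptimal stable systems: Let A be a real n×n Hurwitz matrix, B a real n×m matrix, C a real p×n matrix, γ > 0, and define F(ω) := C·((iω)I − A)⁻¹·B ∈ ℂ^{p×m} for ω ∈ ℝ. If sup_{ω∈ℝ} ‖F(ω)‖ < γ, then for every ω the matrix I − γ⁻²·F(ω)*·F(ω) is Hermitian positive definite with determinant a real number in (0,1], and the function ω ↦ −log det(I − γ⁻²·F(ω)*·F(ω)) is integrable on ℝ; in particular the entropy I_γ(F) := −(γ²/(2π))·∫_ℝ log det(I − γ⁻²·F(ω)*·F(ω)) dω is finite. -/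
open Matrix MeasureTheory
open scoped ENNReal ComplexOrder
noncomputable section

/-- Entrywise coercion of a real matrix to a complex matrix. -/
def cmap {I J : Type*} (M : Matrix I J ℝ) : Matrix I J ℂ :=
  M.map (fun x => (x : ℂ))

/-- A real square matrix is Hurwitz if all its complex eigenvalues have negative real part. -/
def IsHurwitz {I : Type*} [Fintype I] [DecidableEq I] (M : Matrix I I ℝ) : Prop :=
  ∀ μ ∈ spectrum ℂ (cmap M), μ.re < 0

/-- ℓ²→ℓ² operator norm (largest singular value) of a complex matrix. -/
def opNorm {I J : Type*} [Fintype I] [Fintype J] [DecidableEq J] (M : Matrix I J ℂ) : ℝ :=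
  ‖LinearMap.toContinuousLinearMap (Matrix.toEuclideanLin M)‖

/-- Frequency response of a state-space realization `(Ac, Bc, Cc, Dc)`. -/
def fresp {I J K : Type*} [Fintype I] [DecidableEq I]
    (Ac : Matrix I I ℝ) (Bc : Matrix I J ℝ) (Cc : Matrix K I ℝ) (Dc : Matrix K J ℝ)
    (ω : ℝ) : Matrix K J ℂ :=
  cmap Dc + cmap Cc * (((ω : ℂ) * Complex.I) • (1 : Matrix I I ℂ) - cmap Ac)⁻¹ * cmap Bc

/-- Closed-loop `A` matrix. -/
def Acl {N M K NK : Type*} [Fintype M] [Fintype K] [Fintype NK]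
    (A : Matrix N N ℝ) (B2 : Matrix N M ℝ) (C2 : Matrix K N ℝ)
    (AK : Matrix NK NK ℝ) (BK : Matrix NK K ℝ) (CK : Matrix M NK ℝ) (DK : Matrix M K ℝ) :
    Matrix (N ⊕ NK) (N ⊕ NK) ℝ :=
  fromBlocks (A + B2 * DK * C2) (B2 * CK) (BK * C2) AK

/-- Closed-loop `B` matrix. -/
def Bcl {N M K Q NK : Type*} [Fintype M] [Fintype K]
    (B1 : Matrix N Q ℝ) (B2 : Matrix N M ℝ) (D21 : Matrix K Q ℝ)
    (BK : Matrix NK K ℝ) (DK : Matrix M K ℝ) :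
    Matrix (N ⊕ NK) Q ℝ :=
  fromRows (B1 + B2 * DK * D21) (BK * D21)

/-- Closed-loop `C` matrix. -/
def Ccl {N M K P NK : Type*} [Fintype M] [Fintype K]
    (C1 : Matrix P N ℝ) (C2 : Matrix K N ℝ) (D12 : Matrix P M ℝ)
    (CK : Matrix M NK ℝ) (DK : Matrix M K ℝ) :
    Matrix P (N ⊕ NK) ℝ :=
  fromCols (C1 + D12 * DK * C2) (D12 * CK)

/-- Closed-loop `D` matrix. -/
def Dcl {M K P Q : Type*} [Fintype M] [Fintype K]
    (D12 : Matrix P M ℝ) (D21 : Matrix K Q ℝ) (DK : Matrix M K ℝ) : Matrix P Q ℝ :=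
  D12 * DK * D21

/-- Entropy with tolerance `γ` of a frequency response `T`, valued in `[0,∞]`. -/
def entropy {P J : Type*} [Fintype P] [Fintype J] [DecidableEq J] (γ : ℝ)
    (T : ℝ → Matrix P J ℂ) : ℝ≥0∞ :=
  ENNReal.ofReal (γ ^ 2 / (2 * Real.pi)) *
    ∫⁻ ω : ℝ, ENNReal.ofReal
      (-Real.log ((((1 : Matrix J J ℂ) - (γ ^ 2)⁻¹ • ((T ω)ᴴ * T ω)).det).re))

namespace Aux
variable {I J K : Type*} [Fintype I] [Fintype J] [Fintype K]

lemma opNorm_nonneg [DecidableEq J] (M : Matrix I J ℂ) : 0 ≤ opNorm M :=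
  norm_nonneg _

lemma norm_mulVec_le [DecidableEq J] (M : Matrix I J ℂ) (x : J → ℂ) :
    ‖(WithLp.equiv 2 (I → ℂ)).symm (M *ᵥ x)‖ ≤ opNorm M * ‖(WithLp.equiv 2 (J → ℂ)).symm x‖ := by
  have h := (LinearMap.toContinuousLinearMap (Matrix.toEuclideanLin M)).le_opNorm
    ((WithLp.equiv 2 (J → ℂ)).symm x)
  simpa [opNorm] using h

lemma opNorm_le_bound [DecidableEq J] (M : Matrix I J ℂ) {a : ℝ} (ha : 0 ≤ a)
    (h : ∀ x : J → ℂ, ‖(WithLp.equiv 2 (I → ℂ)).symm (M *ᵥ x)‖ ≤ a * ‖(WithLp.equiv 2 (J → ℂ)).symm x‖) :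
    opNorm M ≤ a := by
  apply ContinuousLinearMap.opNorm_le_bound _ ha
  intro v
  simpa [Matrix.toEuclideanLin_apply] using h ((WithLp.equiv 2 (J → ℂ)) v)

lemma opNorm_mul_le [DecidableEq J] [DecidableEq K] (M : Matrix I J ℂ) (N : Matrix J K ℂ) :
    opNorm (M * N) ≤ opNorm M * opNorm N := by
  apply opNorm_le_bound _ (mul_nonneg (opNorm_nonneg M) (opNorm_nonneg N))
  intro x
  rw [← Matrix.mulVec_mulVec]
  calc ‖(WithLp.equiv 2 (I → ℂ)).symm (M *ᵥ (N *ᵥ x))‖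
      ≤ opNorm M * ‖(WithLp.equiv 2 (J → ℂ)).symm (N *ᵥ x)‖ := norm_mulVec_le M _
    _ ≤ opNorm M * (opNorm N * ‖(WithLp.equiv 2 (K → ℂ)).symm x‖) :=
        mul_le_mul_of_nonneg_left (norm_mulVec_le N x) (opNorm_nonneg M)
    _ = opNorm M * opNorm N * ‖(WithLp.equiv 2 (K → ℂ)).symm x‖ := by ring

lemma opNorm_smul [DecidableEq J] (z : ℂ) (M : Matrix I J ℂ) :
    opNorm (z • M) = ‖z‖ * opNorm M := by
  unfold opNorm
  rw [_root_.map_smul, _root_.map_smul]; exact norm_smul z (LinearMap.toContinuousLinearMap (Matrix.toEuclideanLin M))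

lemma opNorm_one [DecidableEq J] : opNorm (1 : Matrix J J ℂ) ≤ 1 := by
  apply opNorm_le_bound _ zero_le_one
  intro x
  simp [Matrix.one_mulVec]

lemma opNorm_add_le [DecidableEq J] (M N : Matrix I J ℂ) :
    opNorm (M + N) ≤ opNorm M + opNorm N := by
  unfold opNorm
  rw [map_add, map_add]
  exact norm_add_le _ _

lemma continuous_opNorm [DecidableEq J] :
    Continuous (fun M : Matrix I J ℂ => opNorm M) := by
  have h : Continuous (fun M : Matrix I J ℂ =>
      LinearMap.toContinuousLinearMap (Matrix.toEuclideanLin M)) :=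
    by
      have h := LinearMap.continuous_of_finiteDimensional
        ((Matrix.toEuclideanLin.trans LinearMap.toContinuousLinearMap :
          Matrix I J ℂ ≃ₗ[ℂ] _).toLinearMap)
      exact h
  exact h.norm


variable {n : ℕ}

lemma isUnit_res {A : Matrix (Fin n) (Fin n) ℝ} (hA : IsHurwitz A) (ω : ℝ) :
    IsUnit (((ω : ℂ) * Complex.I) • (1 : Matrix (Fin n) (Fin n) ℂ) - cmap A) := by
  by_contra h
  have hmem : ((ω : ℂ) * Complex.I) ∈ spectrum ℂ (cmap A) := by
    rw [spectrum.mem_iff]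
    rwa [Algebra.algebraMap_eq_smul_one]
  have := hA _ hmem
  simp at this

lemma det_res_ne {A : Matrix (Fin n) (Fin n) ℝ} (hA : IsHurwitz A) (ω : ℝ) :
    (((ω : ℂ) * Complex.I) • (1 : Matrix (Fin n) (Fin n) ℂ) - cmap A).det ≠ 0 := by
  have := (Matrix.isUnit_iff_isUnit_det _).mp (isUnit_res hA ω)
  exact this.ne_zero

lemma continuous_res_aux {A : Matrix (Fin n) (Fin n) ℝ} :
    Continuous (fun ω : ℝ => ((ω : ℂ) * Complex.I) • (1 : Matrix (Fin n) (Fin n) ℂ) - cmap A) :=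
  ((Complex.continuous_ofReal.mul continuous_const).smul continuous_const).sub continuous_const

lemma continuous_res {A : Matrix (Fin n) (Fin n) ℝ} (hA : IsHurwitz A) :
    Continuous (fun ω : ℝ =>
      (((ω : ℂ) * Complex.I) • (1 : Matrix (Fin n) (Fin n) ℂ) - cmap A)⁻¹) := by
  have heq : (fun ω : ℝ =>
      (((ω : ℂ) * Complex.I) • (1 : Matrix (Fin n) (Fin n) ℂ) - cmap A)⁻¹)
      = fun ω : ℝ => ((((ω : ℂ) * Complex.I) • (1 : Matrix (Fin n) (Fin n) ℂ) - cmap A).det)⁻¹ •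
        ((((ω : ℂ) * Complex.I) • (1 : Matrix (Fin n) (Fin n) ℂ) - cmap A)).adjugate := by
    funext ω
    rw [Matrix.inv_def, Ring.inverse_eq_inv']
  rw [heq]
  exact ((continuous_res_aux.matrix_det).inv₀ (det_res_ne hA)).smul
    continuous_res_aux.matrix_adjugate

end Aux

namespace Aux
variable {n m p : ℕ}

/-- The resolvent. -/
def res (A : Matrix (Fin n) (Fin n) ℝ) (ω : ℝ) : Matrix (Fin n) (Fin n) ℂ :=
  (((ω : ℂ) * Complex.I) • (1 : Matrix (Fin n) (Fin n) ℂ) - cmap A)⁻¹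

lemma continuous_res' {A : Matrix (Fin n) (Fin n) ℝ} (hA : IsHurwitz A) :
    Continuous (res A) := continuous_res hA

lemma smul_res_eq {A : Matrix (Fin n) (Fin n) ℝ} (hA : IsHurwitz A) (ω : ℝ) :
    ((ω : ℂ) * Complex.I) • res A ω = 1 + res A ω * cmap A := by
  have h := Matrix.nonsing_inv_mul _ ((Matrix.isUnit_iff_isUnit_det _).mp (isUnit_res hA ω))
  rw [Matrix.mul_sub, Matrix.mul_smul, mul_one] at h
  unfold res
  exact sub_eq_iff_eq_add.mp h

lemma norm_omega_I (ω : ℝ) : ‖(ω : ℂ) * Complex.I‖ = |ω| := by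
  simp [norm_mul]

lemma opNorm_smul_res {A : Matrix (Fin n) (Fin n) ℝ} (ω : ℝ) :
    opNorm (((ω : ℂ) * Complex.I) • res A ω) = |ω| * opNorm (res A ω) := by
  rw [opNorm_smul, norm_omega_I]

lemma res_bound_far {A : Matrix (Fin n) (Fin n) ℝ} (hA : IsHurwitz A) (ω : ℝ)
    (hω : opNorm (cmap A) + 1 ≤ |ω|) : opNorm (res A ω) ≤ 1 := by
  set a := opNorm (cmap A) with ha
  set r := opNorm (res A ω) with hr
  have h1 : |ω| * r ≤ 1 + r * a := by
    rw [← opNorm_smul_res, smul_res_eq hA]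
    calc opNorm (1 + res A ω * cmap A) ≤ opNorm (1 : Matrix (Fin n) (Fin n) ℂ)
          + opNorm (res A ω * cmap A) := opNorm_add_le _ _
      _ ≤ 1 + r * a := add_le_add opNorm_one (opNorm_mul_le _ _)
  have hr0 : 0 ≤ r := opNorm_nonneg _
  nlinarith

lemma exists_res_bound {A : Matrix (Fin n) (Fin n) ℝ} (hA : IsHurwitz A) :
    ∃ M₁ : ℝ, 1 ≤ M₁ ∧ ∀ ω : ℝ, opNorm (res A ω) ≤ M₁ := by
  set a := opNorm (cmap A) with ha
  have hcomp : IsCompact (Set.Icc (-(a+1)) (a+1)) := isCompact_Icc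
  have hcont : ContinuousOn (fun ω : ℝ => opNorm (res A ω)) (Set.Icc (-(a+1)) (a+1)) :=
    (continuous_opNorm.comp (continuous_res' hA)).continuousOn
  obtain ⟨M₀, hM₀⟩ := hcomp.exists_bound_of_continuousOn hcont
  refine ⟨max M₀ 1, le_max_right _ _, fun ω => ?_⟩
  by_cases hω : ω ∈ Set.Icc (-(a+1)) (a+1)
  · calc opNorm (res A ω) = ‖opNorm (res A ω)‖ := by
          rw [Real.norm_eq_abs, abs_of_nonneg (opNorm_nonneg _)]
      _ ≤ M₀ := hM₀ ω hω
      _ ≤ max M₀ 1 := le_max_left _ _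
  · have : a + 1 ≤ |ω| := by
      simp only [Set.mem_Icc, not_and_or, not_le] at hω
      rcases hω with h | h
      · rw [abs_of_neg (by nlinarith [opNorm_nonneg (cmap A)])]; linarith
      · rw [abs_of_pos (by nlinarith [opNorm_nonneg (cmap A)])]; linarith
    exact (res_bound_far hA ω this).trans (le_max_right _ _)

lemma exists_res_decay {A : Matrix (Fin n) (Fin n) ℝ} (hA : IsHurwitz A) :
    ∃ L : ℝ, 0 ≤ L ∧ ∀ ω : ℝ, |ω| * opNorm (res A ω) ≤ L := by
  obtain ⟨M₁, hM₁, hres⟩ := exists_res_bound hA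
  refine ⟨1 + opNorm (cmap A) * M₁, by nlinarith [opNorm_nonneg (cmap A)], fun ω => ?_⟩
  rw [← opNorm_smul_res, smul_res_eq hA]
  calc opNorm (1 + res A ω * cmap A)
      ≤ opNorm (1 : Matrix (Fin n) (Fin n) ℂ) + opNorm (res A ω * cmap A) := opNorm_add_le _ _
    _ ≤ 1 + opNorm (res A ω) * opNorm (cmap A) := add_le_add opNorm_one (opNorm_mul_le _ _)
    _ ≤ 1 + opNorm (cmap A) * M₁ := by
        have h1 := hres ω
        have h2 := opNorm_nonneg (cmap A)
        nlinarith [opNorm_nonneg (res A ω)]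

lemma fresp_eq {A : Matrix (Fin n) (Fin n) ℝ} (B : Matrix (Fin n) (Fin m) ℝ)
    (C : Matrix (Fin p) (Fin n) ℝ) (ω : ℝ) :
    fresp A B C 0 ω = cmap C * res A ω * cmap B := by
  unfold fresp res cmap
  rw [Matrix.map_zero _ Complex.ofReal_zero, zero_add]

lemma continuous_fresp {A : Matrix (Fin n) (Fin n) ℝ} (B : Matrix (Fin n) (Fin m) ℝ)
    (C : Matrix (Fin p) (Fin n) ℝ) (hA : IsHurwitz A) :
    Continuous (fresp A B C 0) := by
  have : Continuous (fun ω => cmap C * res A ω * cmap B) :=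
    (continuous_const.matrix_mul (continuous_res' hA)).matrix_mul continuous_const
  simpa [funext (fresp_eq B C (A := A))] using this

lemma exists_fresp_decay {A : Matrix (Fin n) (Fin n) ℝ} (B : Matrix (Fin n) (Fin m) ℝ)
    (C : Matrix (Fin p) (Fin n) ℝ) (hA : IsHurwitz A) :
    ∃ L : ℝ, 0 ≤ L ∧ ∀ ω : ℝ, |ω| * opNorm (fresp A B C 0 ω) ≤ L := by
  obtain ⟨L, hL0, hL⟩ := exists_res_decay hA
  refine ⟨opNorm (cmap C) * L * opNorm (cmap B),
    mul_nonneg (mul_nonneg (opNorm_nonneg _) hL0) (opNorm_nonneg _), fun ω => ?_⟩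
  have h1 : |ω| * opNorm (fresp A B C 0 ω)
      = opNorm (((ω : ℂ) * Complex.I) • fresp A B C 0 ω) := by
    rw [opNorm_smul, norm_omega_I]
  rw [h1, fresp_eq]
  have h2 : ((ω : ℂ) * Complex.I) • (cmap C * res A ω * cmap B)
      = cmap C * (((ω : ℂ) * Complex.I) • res A ω) * cmap B := by
    rw [Matrix.mul_smul, Matrix.smul_mul]
  rw [h2]
  have h3 : opNorm (((ω : ℂ) * Complex.I) • res A ω) ≤ L := by
    rw [opNorm_smul_res]; exact hL ω
  calc opNorm (cmap C * (((ω : ℂ) * Complex.I) • res A ω) * cmap B)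
      ≤ opNorm (cmap C * (((ω : ℂ) * Complex.I) • res A ω)) * opNorm (cmap B) :=
        opNorm_mul_le _ _
    _ ≤ opNorm (cmap C) * opNorm (((ω : ℂ) * Complex.I) • res A ω) * opNorm (cmap B) := by
        have := opNorm_mul_le (cmap C) (((ω : ℂ) * Complex.I) • res A ω)
        nlinarith [opNorm_nonneg (cmap B)]
    _ ≤ opNorm (cmap C) * L * opNorm (cmap B) :=
        mul_le_mul_of_nonneg_right (mul_le_mul_of_nonneg_left h3 (opNorm_nonneg (cmap C)))
          (opNorm_nonneg (cmap B))

end Aux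

namespace Aux
variable {m p : ℕ}

lemma dot_star_self (w : Fin p → ℂ) :
    dotProduct (star w) w = ((‖(WithLp.equiv 2 (Fin p → ℂ)).symm w‖ ^ 2 : ℝ) : ℂ) := by
  rw [dotProduct_comm, ← EuclideanSpace.inner_toLp_toLp]
  rw [inner_self_eq_norm_sq_to_K, Complex.ofReal_pow]
  rfl

lemma dot_herm (F : Matrix (Fin p) (Fin m) ℂ) (x : Fin m → ℂ) :
    dotProduct (star x) ((Fᴴ * F) *ᵥ x)
      = ((‖(WithLp.equiv 2 (Fin p → ℂ)).symm (F *ᵥ x)‖ ^ 2 : ℝ) : ℂ) := by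
  rw [← Matrix.mulVec_mulVec, Matrix.dotProduct_mulVec, Matrix.vecMul_conjTranspose, star_star]
  exact dot_star_self (F *ᵥ x)

lemma dot_main (F : Matrix (Fin p) (Fin m) ℂ) (r : ℝ) (x : Fin m → ℂ) :
    dotProduct (star x)
      ((((1 : Matrix (Fin m) (Fin m) ℂ) - r • (Fᴴ * F)) *ᵥ x))
      = ((‖(WithLp.equiv 2 (Fin m → ℂ)).symm x‖ ^ 2
          - r * ‖(WithLp.equiv 2 (Fin p → ℂ)).symm (F *ᵥ x)‖ ^ 2 : ℝ) : ℂ) := by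
  rw [Matrix.sub_mulVec, dotProduct_sub, Matrix.smul_mulVec,
    dotProduct_smul, Matrix.one_mulVec, dot_star_self, dot_herm]
  rw [Complex.real_smul]
  push_cast
  ring

lemma norm_mulVec_le' (F : Matrix (Fin p) (Fin m) ℂ) (x : Fin m → ℂ) :
    ‖(WithLp.equiv 2 (Fin p → ℂ)).symm (F *ᵥ x)‖
      ≤ opNorm F * ‖(WithLp.equiv 2 (Fin m → ℂ)).symm x‖ := norm_mulVec_le F x

lemma isHermitian_main (F : Matrix (Fin p) (Fin m) ℂ) (r : ℝ) :
    ((1 : Matrix (Fin m) (Fin m) ℂ) - r • (Fᴴ * F)).IsHermitian := by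
  refine Matrix.IsHermitian.sub Matrix.isHermitian_one ?_
  unfold Matrix.IsHermitian
  rw [Matrix.conjTranspose_smul, star_trivial, Matrix.conjTranspose_mul,
    Matrix.conjTranspose_conjTranspose]

lemma posDef_main (F : Matrix (Fin p) (Fin m) ℂ) {γ c : ℝ} (hγ : 0 < γ) (hc : c < γ)
    (hF : opNorm F ≤ c) :
    ((1 : Matrix (Fin m) (Fin m) ℂ) - (γ ^ 2)⁻¹ • (Fᴴ * F)).PosDef := by
  refine Matrix.PosDef.of_dotProduct_mulVec_pos (isHermitian_main F _) (fun x hx => ?_)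
  rw [dot_main]
  rw [Complex.zero_lt_real]
  set X := (WithLp.equiv 2 (Fin m → ℂ)).symm x with hX
  have hXne : X ≠ 0 := by
    simp only [hX, ne_eq, EmbeddingLike.map_eq_zero_iff]
    simpa using hx
  have hXpos : 0 < ‖X‖ := norm_pos_iff.mpr hXne
  have h1 : ‖(WithLp.equiv 2 (Fin p → ℂ)).symm (F *ᵥ x)‖ ≤ opNorm F * ‖X‖ := norm_mulVec_le F x
  have h2 : 0 ≤ ‖(WithLp.equiv 2 (Fin p → ℂ)).symm (F *ᵥ x)‖ := norm_nonneg _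
  have hγ2 : (0:ℝ) < γ ^ 2 := by positivity
  have hc0 : 0 ≤ c := le_trans (opNorm_nonneg F) hF
  have key : ‖(WithLp.equiv 2 (Fin p → ℂ)).symm (F *ᵥ x)‖ ^ 2 < γ ^ 2 * ‖X‖ ^ 2 := by
    have : ‖(WithLp.equiv 2 (Fin p → ℂ)).symm (F *ᵥ x)‖ ≤ c * ‖X‖ := by
      calc ‖(WithLp.equiv 2 (Fin p → ℂ)).symm (F *ᵥ x)‖ ≤ opNorm F * ‖X‖ := h1
        _ ≤ c * ‖X‖ := mul_le_mul_of_nonneg_right hF (norm_nonneg _)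
    have h3 : ‖(WithLp.equiv 2 (Fin p → ℂ)).symm (F *ᵥ x)‖ ^ 2 ≤ (c * ‖X‖) ^ 2 :=
      pow_le_pow_left₀ h2 this 2
    have hcγ : c ^ 2 < γ ^ 2 := by nlinarith
    nlinarith [h3, mul_lt_mul_of_pos_right hcγ (pow_pos hXpos 2)]
  rw [sub_pos]
  rw [inv_mul_lt_iff₀ hγ2] -- (γ^2)⁻¹ * ‖Fx‖^2 < ‖X‖^2
  nlinarith

end Aux

namespace Aux
variable {m p : ℕ}

lemma det_main_eq (F : Matrix (Fin p) (Fin m) ℂ) (r : ℝ) :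
    ((1 : Matrix (Fin m) (Fin m) ℂ) - r • (Fᴴ * F)).det
      = ((∏ i, (isHermitian_main F r).eigenvalues i : ℝ) : ℂ) := by
  rw [(isHermitian_main F r).det_eq_prod_eigenvalues]
  push_cast
  rfl

lemma eig_main (F : Matrix (Fin p) (Fin m) ℂ) (r : ℝ) (i : Fin m) :
    ∃ t : ℝ, 0 ≤ t ∧ t ≤ opNorm F ∧
      (isHermitian_main F r).eigenvalues i = 1 - r * t ^ 2 := by
  set hH := isHermitian_main F r with hHdef
  set v : EuclideanSpace ℂ (Fin m) := hH.eigenvectorBasis i with hv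
  have hnorm : ‖v‖ = 1 := hH.eigenvectorBasis.orthonormal.1 i
  refine ⟨‖(WithLp.equiv 2 (Fin p → ℂ)).symm (F *ᵥ ⇑v)‖, norm_nonneg _, ?_, ?_⟩
  · have h := norm_mulVec_le F (⇑v)
    have hX : (WithLp.equiv 2 (Fin m → ℂ)).symm ⇑v = v := rfl
    rw [hX, hnorm, mul_one] at h
    exact h
  · have h := hH.eigenvalues_eq i
    rw [dot_main] at h
    have hX : (WithLp.equiv 2 (Fin m → ℂ)).symm ⇑v = v := rfl
    rw [hX, hnorm] at h
    simpa [← Complex.ofReal_pow] using h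

lemma det_facts (F : Matrix (Fin p) (Fin m) ℂ) {γ c : ℝ} (hγ : 0 < γ) (hc : c < γ)
    (hc0 : 0 ≤ c) (hF : opNorm F ≤ c) :
    (((1 : Matrix (Fin m) (Fin m) ℂ) - (γ ^ 2)⁻¹ • (Fᴴ * F)).det).im = 0 ∧
    0 < (((1 : Matrix (Fin m) (Fin m) ℂ) - (γ ^ 2)⁻¹ • (Fᴴ * F)).det).re ∧
    (((1 : Matrix (Fin m) (Fin m) ℂ) - (γ ^ 2)⁻¹ • (Fᴴ * F)).det).re ≤ 1 ∧
    0 ≤ -Real.log ((((1 : Matrix (Fin m) (Fin m) ℂ) - (γ ^ 2)⁻¹ • (Fᴴ * F)).det).re) ∧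
    (1 - c ^ 2 / γ ^ 2) *
        (-Real.log ((((1 : Matrix (Fin m) (Fin m) ℂ) - (γ ^ 2)⁻¹ • (Fᴴ * F)).det).re))
      ≤ (m : ℝ) * ((γ ^ 2)⁻¹ * opNorm F ^ 2) := by
  set r : ℝ := (γ ^ 2)⁻¹ with hr
  have hγ2 : (0:ℝ) < γ ^ 2 := by positivity
  have hr0 : 0 < r := by positivity
  set ν : Fin m → ℝ := (isHermitian_main F r).eigenvalues with hν
  set ρ : ℝ := c ^ 2 / γ ^ 2 with hρ
  have hρ0 : 0 ≤ ρ := by positivity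
  have hρ1 : ρ < 1 := by
    rw [hρ, div_lt_one hγ2]
    nlinarith
  -- eigenvalue bounds
  have hbound : ∀ i, 1 - ρ ≤ ν i ∧ ν i ≤ 1 ∧ 1 - ν i ≤ r * opNorm F ^ 2 := by
    intro i
    obtain ⟨t, ht0, htF, hti⟩ := eig_main F r i
    have htc : t ≤ c := le_trans htF hF
    have htsq : t ^ 2 ≤ opNorm F ^ 2 := pow_le_pow_left₀ ht0 htF 2
    have htsq' : t ^ 2 ≤ c ^ 2 := pow_le_pow_left₀ ht0 htc 2
    refine ⟨?_, ?_, ?_⟩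
    · rw [hν, hti, hρ, div_eq_mul_inv]
      nlinarith
    · rw [hν, hti]; nlinarith
    · rw [hν, hti]; nlinarith
  have hdet := det_main_eq F r
  have him : (((1 : Matrix (Fin m) (Fin m) ℂ) - r • (Fᴴ * F)).det).im = 0 := by
    rw [hdet]; exact Complex.ofReal_im _
  have hre : (((1 : Matrix (Fin m) (Fin m) ℂ) - r • (Fᴴ * F)).det).re = ∏ i, ν i := by
    rw [hdet]; exact Complex.ofReal_re _
  set d : ℝ := ∏ i, ν i with hd
  have hνpos : ∀ i, 0 < ν i := fun i => lt_of_lt_of_le (by linarith) (hbound i).1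
  have hdpos : 0 < d := Finset.prod_pos (fun i _ => hνpos i)
  have hdle : d ≤ 1 :=
    Finset.prod_le_one (fun i _ => (hνpos i).le) (fun i _ => (hbound i).2.1)
  have hlogd : Real.log d = ∑ i, Real.log (ν i) :=
    Real.log_prod (fun i _ => (hνpos i).ne')
  have hlog_le : ∀ i, (1 - ρ) * (-Real.log (ν i)) ≤ r * opNorm F ^ 2 := by
    intro i
    obtain ⟨h1, h2, h3⟩ := hbound i
    have hνi := hνpos i
    have hlog1 : Real.log ((ν i)⁻¹) ≤ (ν i)⁻¹ - 1 :=
      Real.log_le_sub_one_of_pos (by positivity)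
    rw [Real.log_inv] at hlog1
    have hlognn : -Real.log (ν i) ≥ 0 := by
      have := Real.log_nonpos (hνpos i).le h2
      linarith
    have hcancel : ν i * (ν i)⁻¹ = 1 := mul_inv_cancel₀ hνi.ne'
    -- (1-ρ)(-log ν) ≤ ν * (-log ν) ≤ ν ((ν)⁻¹ - 1) = 1 - ν ≤ r‖F‖²
    nlinarith [mul_le_mul_of_nonneg_right h1 hlognn,
      mul_le_mul_of_nonneg_left hlog1 hνi.le]
  have hsum : (1 - ρ) * (-Real.log d) ≤ (m : ℝ) * (r * opNorm F ^ 2) := by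
    rw [hlogd, ← Finset.sum_neg_distrib, Finset.mul_sum]
    calc ∑ i, (1 - ρ) * (-Real.log (ν i))
        ≤ ∑ _i : Fin m, r * opNorm F ^ 2 := Finset.sum_le_sum (fun i _ => hlog_le i)
      _ = (m : ℝ) * (r * opNorm F ^ 2) := by
          simp [Finset.sum_const, nsmul_eq_mul]
  rw [hre, him]
  exact ⟨rfl, hdpos, hdle, by
    have := Real.log_nonpos hdpos.le hdle; linarith, by rw [hρ] at hsum ⊢; exact hsum⟩

lemma main_integrable {n m p : ℕ} (γ : ℝ) (hγ : 0 < γ)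
    (A : Matrix (Fin n) (Fin n) ℝ) (B : Matrix (Fin n) (Fin m) ℝ) (C : Matrix (Fin p) (Fin n) ℝ)
    (hA : IsHurwitz A) {c : ℝ} (hc0 : 0 ≤ c) (hcγ : c < γ)
    (hFc : ∀ ω : ℝ, opNorm (fresp A B C 0 ω) ≤ c) :
    Integrable (fun ω : ℝ =>
      -Real.log ((((1 : Matrix (Fin m) (Fin m) ℂ)
          - (γ ^ 2)⁻¹ • ((fresp A B C 0 ω)ᴴ * fresp A B C 0 ω)).det).re)) := by
  set F := fresp A B C 0 with hF
  set g : ℝ → ℝ := fun ω =>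
    -Real.log ((((1 : Matrix (Fin m) (Fin m) ℂ) - (γ ^ 2)⁻¹ • ((F ω)ᴴ * F ω)).det).re) with hg
  have hpt := fun ω : ℝ => det_facts (F ω) hγ hcγ hc0 (hFc ω)
  -- continuity
  have hFcont : Continuous F := continuous_fresp B C hA
  have hM : Continuous (fun ω : ℝ =>
      (1 : Matrix (Fin m) (Fin m) ℂ) - (γ ^ 2)⁻¹ • ((F ω)ᴴ * F ω)) :=
    continuous_const.sub (((hFcont.matrix_conjTranspose).matrix_mul hFcont).const_smul ((γ ^ 2)⁻¹ : ℝ))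
  have hd : Continuous (fun ω : ℝ =>
      (((1 : Matrix (Fin m) (Fin m) ℂ) - (γ ^ 2)⁻¹ • ((F ω)ᴴ * F ω)).det).re) :=
    Complex.continuous_re.comp hM.matrix_det
  have hgcont : Continuous g := (hd.log (fun ω => (hpt ω).2.1.ne')).neg
  -- decay
  obtain ⟨L, hL0, hL⟩ := exists_fresp_decay B C hA
  have hγ2 : (0:ℝ) < γ ^ 2 := by positivity
  set ρ : ℝ := c ^ 2 / γ ^ 2 with hρ
  have hρ1 : ρ < 1 := by rw [hρ, div_lt_one hγ2]; nlinarith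
  set D : ℝ := (m : ℝ) * ((γ ^ 2)⁻¹ * (c ^ 2 + L ^ 2)) / (1 - ρ) with hD
  have hbound : ∀ ω : ℝ, g ω ≤ D / (1 + ω ^ 2) := by
    intro ω
    have hω2 : (0:ℝ) < 1 + ω ^ 2 := by positivity
    rw [le_div_iff₀ hω2, hD, le_div_iff₀ (by linarith : (0:ℝ) < 1 - ρ)]
    have h1 := (hpt ω).2.2.2.2
    have h2 := hFc ω
    have h3 := hL ω
    have h4 : ω ^ 2 * opNorm (F ω) ^ 2 ≤ L ^ 2 := by
      have := mul_le_mul_of_nonneg_left h3 (abs_nonneg ω)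
      calc ω ^ 2 * opNorm (F ω) ^ 2 = (|ω| * opNorm (F ω)) ^ 2 := by
            rw [mul_pow, sq_abs]
        _ ≤ L ^ 2 := pow_le_pow_left₀ (mul_nonneg (abs_nonneg _) (opNorm_nonneg _)) h3 2
    have h5 : opNorm (F ω) ^ 2 ≤ c ^ 2 := pow_le_pow_left₀ (opNorm_nonneg _) h2 2
    have h6 : (1 + ω ^ 2) * opNorm (F ω) ^ 2 ≤ c ^ 2 + L ^ 2 := by nlinarith
    have h7 : 0 ≤ g ω := (hpt ω).2.2.2.1
    have hr0 : (0:ℝ) < (γ ^ 2)⁻¹ := by positivity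
    -- (1-ρ) * g ≤ m * (r * X²)  and  (1+ω²) X² ≤ c²+L²
    have h8 : (1 - ρ) * g ω * (1 + ω ^ 2) ≤ (m:ℝ) * ((γ ^ 2)⁻¹ * opNorm (F ω) ^ 2) * (1 + ω ^ 2) :=
      mul_le_mul_of_nonneg_right h1 hω2.le
    have h9 : (m:ℝ) * ((γ ^ 2)⁻¹ * opNorm (F ω) ^ 2) * (1 + ω ^ 2)
        ≤ (m:ℝ) * ((γ ^ 2)⁻¹ * (c ^ 2 + L ^ 2)) := by
      have hm0 : (0:ℝ) ≤ (m:ℝ) * (γ ^ 2)⁻¹ := by positivity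
      calc (m:ℝ) * ((γ ^ 2)⁻¹ * opNorm (F ω) ^ 2) * (1 + ω ^ 2)
          = (m:ℝ) * (γ ^ 2)⁻¹ * ((1 + ω ^ 2) * opNorm (F ω) ^ 2) := by ring
        _ ≤ (m:ℝ) * (γ ^ 2)⁻¹ * (c ^ 2 + L ^ 2) := mul_le_mul_of_nonneg_left h6 hm0
        _ = (m:ℝ) * ((γ ^ 2)⁻¹ * (c ^ 2 + L ^ 2)) := by ring
    nlinarith
  -- integrability by domination
  have hdom : Integrable (fun ω : ℝ => D / (1 + ω ^ 2)) := by
    simpa [div_eq_mul_inv] using integrable_inv_one_add_sq.const_mul D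
  exact hdom.mono' hgcont.aestronglyMeasurable
    (Filter.Eventually.of_forall (fun ω => by
      rw [Real.norm_eq_abs, abs_of_nonneg (hpt ω).2.2.2.1]
      exact hbound ω))


end Aux

/-- **Finiteness of the entropy integrand for strictly suboptimal stable systems.** If `A` is
Hurwitz and the frequency response `F(ω) = C((iω)I − A)⁻¹B` has supremum norm `< γ`, then each
`I − γ⁻²F(ω)*F(ω)` is Hermitian positive definite with determinant in `(0,1]`, the entropy
integrand is integrable, and the entropy is finite. -/
theorem entropy_finite_of_suboptimal (n m p : ℕ) (γ : ℝ) (hγ : 0 < γ)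
    (A : Matrix (Fin n) (Fin n) ℝ) (B : Matrix (Fin n) (Fin m) ℝ) (C : Matrix (Fin p) (Fin n) ℝ)
    (hA : IsHurwitz A)
    (hnorm : ∃ c : ℝ, c < γ ∧ ∀ ω : ℝ, opNorm (fresp A B C 0 ω) ≤ c) :
    (∀ ω : ℝ,
      ((1 : Matrix (Fin m) (Fin m) ℂ) - (γ ^ 2)⁻¹ • ((fresp A B C 0 ω)ᴴ * fresp A B C 0 ω)).PosDef ∧
      (((1 : Matrix (Fin m) (Fin m) ℂ)
          - (γ ^ 2)⁻¹ • ((fresp A B C 0 ω)ᴴ * fresp A B C 0 ω)).det).im = 0 ∧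
      0 < (((1 : Matrix (Fin m) (Fin m) ℂ)
          - (γ ^ 2)⁻¹ • ((fresp A B C 0 ω)ᴴ * fresp A B C 0 ω)).det).re ∧
      (((1 : Matrix (Fin m) (Fin m) ℂ)
          - (γ ^ 2)⁻¹ • ((fresp A B C 0 ω)ᴴ * fresp A B C 0 ω)).det).re ≤ 1) ∧
    Integrable (fun ω : ℝ =>
      -Real.log ((((1 : Matrix (Fin m) (Fin m) ℂ)
          - (γ ^ 2)⁻¹ • ((fresp A B C 0 ω)ᴴ * fresp A B C 0 ω)).det).re)) ∧
    entropy γ (fresp A B C 0) ≠ ⊤ := by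
  obtain ⟨c₀, hc₀γ, hc₀⟩ := hnorm
  have hcγ : max c₀ 0 < γ := max_lt hc₀γ hγ
  have hc0 : (0:ℝ) ≤ max c₀ 0 := le_max_right _ _
  have hFc : ∀ ω : ℝ, opNorm (fresp A B C 0 ω) ≤ max c₀ 0 :=
    fun ω => le_trans (hc₀ ω) (le_max_left _ _)
  have hInt := Aux.main_integrable γ hγ A B C hA hc0 hcγ hFc
  refine ⟨fun ω => ?_, hInt, ?_⟩
  · obtain ⟨him, hpos, hle, -, -⟩ := Aux.det_facts (fresp A B C 0 ω) hγ hcγ hc0 (hFc ω)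
    exact ⟨Aux.posDef_main _ hγ hcγ (hFc ω), him, hpos, hle⟩
  · unfold entropy
    refine ENNReal.mul_ne_top ENNReal.ofReal_ne_top ?_
    exact hInt.lintegral_lt_top.ne

end
end

section
/- Square-integrability of stable strictly proper frequency responses: Let A be a real n×n Hurwitz matrix, B a real n×m matrix, and C a real p×n matrix. Then the function ω ↦ ‖C·((iω)I − A)⁻¹·B‖_F², where ‖·‖_F denotes the Frobenius norm of a complex matrix, is integrable on ℝ. -/
open Matrix MeasureTheory
noncomputable section

/-- Squared Frobenius norm of a complex matrix. -/
def frobSq {I J : Type*} [Fintype I] [Fintype J] (M : Matrix I J ℂ) : ℝ :=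
  ∑ i, ∑ j, ‖M i j‖ ^ 2

open Filter Asymptotics

lemma matInv_eq {k : ℕ} (X : Matrix (Fin k) (Fin k) ℂ) : X⁻¹ = (X.det)⁻¹ • X.adjugate := by
  rw [Matrix.inv_def, Ring.inverse_eq_inv']

lemma continuous_frobSq {I J : Type*} [Fintype I] [Fintype J] :
    Continuous (frobSq (I := I) (J := J)) := by
  unfold frobSq
  refine continuous_finset_sum _ fun i _ => continuous_finset_sum _ fun j _ => ?_
  exact (((continuous_apply j).comp (continuous_apply i)).norm).pow 2

lemma frobSq_nonneg {I J : Type*} [Fintype I] [Fintype J] (M : Matrix I J ℂ) :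
    0 ≤ frobSq M :=
  Finset.sum_nonneg fun _ _ => Finset.sum_nonneg fun _ _ => by positivity

lemma frobSq_real_smul {I J : Type*} [Fintype I] [Fintype J] (r : ℝ) (M : Matrix I J ℂ) :
    frobSq (((r : ℂ)) • M) = r ^ 2 * frobSq M := by
  simp only [frobSq, Finset.mul_sum]
  refine Finset.sum_congr rfl fun i _ => Finset.sum_congr rfl fun j _ => ?_
  simp [Matrix.smul_apply, norm_smul, mul_pow, Complex.norm_real, sq_abs]

/-- **Square-integrability of stable strictly proper frequency responses.** If `A` is Hurwitz,
then `ω ↦ ‖C((iω)I − A)⁻¹B‖_F²` is integrable on `ℝ`. -/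
theorem stable_strictly_proper_sq_integrable (n m p : ℕ)
    (A : Matrix (Fin n) (Fin n) ℝ) (B : Matrix (Fin n) (Fin m) ℝ) (C : Matrix (Fin p) (Fin n) ℝ)
    (hA : IsHurwitz A) :
    Integrable (fun ω : ℝ => frobSq
      (cmap C * (((ω : ℂ) * Complex.I) • (1 : Matrix (Fin n) (Fin n) ℂ) - cmap A)⁻¹ * cmap B)) := by
  set A' := cmap A with hA'
  set B' := cmap B with hB'
  set C' := cmap C with hC'
  set M : ℝ → Matrix (Fin n) (Fin n) ℂ :=
    fun ω => ((ω : ℂ) * Complex.I) • (1 : Matrix (Fin n) (Fin n) ℂ) - A' with hM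
  set F : ℝ → Matrix (Fin p) (Fin m) ℂ := fun ω => C' * (M ω)⁻¹ * B' with hF
  -- every M ω is invertible
  have hunit : ∀ ω : ℝ, IsUnit (M ω) := by
    intro ω
    have h0 : ((ω : ℂ) * Complex.I) ∉ spectrum ℂ A' := by
      intro hmem
      have := hA _ hmem
      simp [Complex.mul_re] at this
    rw [spectrum.notMem_iff, Algebra.algebraMap_eq_smul_one] at h0
    exact h0
  have hdu : ∀ ω : ℝ, IsUnit (M ω).det := fun ω =>
    (Matrix.isUnit_iff_isUnit_det _).mp (hunit ω)
  have hdet : ∀ ω : ℝ, (M ω).det ≠ 0 := fun ω => isUnit_iff_ne_zero.mp (hdu ω)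
  -- continuity of F
  have hMc : Continuous M :=
    ((Complex.continuous_ofReal.mul continuous_const).smul continuous_const).sub continuous_const
  have hFc : Continuous F := by
    have he : F = fun ω => C' * (((M ω).det)⁻¹ • (M ω).adjugate) * B' := by
      funext ω; simp only [hF, matInv_eq]
    rw [he]
    exact (continuous_const.matrix_mul
      (((hMc.matrix_det).inv₀ hdet).smul hMc.matrix_adjugate)).matrix_mul continuous_const
  have hcont : Continuous fun ω => frobSq (F ω) := continuous_frobSq.comp hFc
  -- the compactified family
  set G : ℝ → Matrix (Fin n) (Fin n) ℂ :=
    fun t => Complex.I • (1 : Matrix (Fin n) (Fin n) ℂ) - (t : ℂ) • A' with hG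
  set Φ : ℝ → Matrix (Fin p) (Fin m) ℂ :=
    fun t => C' * (((G t).det)⁻¹ • (G t).adjugate) * B' with hΦ
  have hGc : Continuous G :=
    continuous_const.sub ((Complex.continuous_ofReal).smul continuous_const)
  have hG0 : (G 0).det ≠ 0 := by
    have he : G 0 = Complex.I • (1 : Matrix (Fin n) (Fin n) ℂ) := by simp [hG]
    rw [he, Matrix.det_smul]
    simp [Complex.I_ne_zero]
  have hΦc : ContinuousAt Φ 0 := by
    have h1 : ContinuousAt (fun t => ((G t).det)⁻¹ • (G t).adjugate) 0 :=
      ((hGc.matrix_det.continuousAt).inv₀ hG0).smul hGc.matrix_adjugate.continuousAt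
    have h2 : Continuous fun N : Matrix (Fin n) (Fin n) ℂ => C' * N * B' :=
      (continuous_const.matrix_mul continuous_id).matrix_mul continuous_const
    exact (h2.continuousAt).comp h1
  -- for ω ≠ 0 : (ω:ℂ) • F ω = Φ ω⁻¹
  have key : ∀ ω : ℝ, ω ≠ 0 → (ω : ℂ) • F ω = Φ ω⁻¹ := by
    intro ω hω
    have hωC : (ω : ℂ) ≠ 0 := Complex.ofReal_ne_zero.mpr hω
    have hGM : G ω⁻¹ = (ω : ℂ)⁻¹ • M ω := by
      simp only [hG, hM, smul_sub, smul_smul, Complex.ofReal_inv]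
      rw [inv_mul_cancel_left₀ hωC]
    have hMinv : (G ω⁻¹)⁻¹ = (ω : ℂ) • (M ω)⁻¹ := by
      apply Matrix.inv_eq_right_inv
      rw [hGM, Matrix.smul_mul, Matrix.mul_smul, smul_smul, inv_mul_cancel₀ hωC, one_smul,
        Matrix.mul_nonsing_inv _ (hdu ω)]
    have h3 : (ω : ℂ) • F ω = C' * ((ω : ℂ) • (M ω)⁻¹) * B' := by
      show (ω : ℂ) • (C' * (M ω)⁻¹ * B') = _
      rw [Matrix.mul_smul, Matrix.smul_mul]
    have h4 : Φ ω⁻¹ = C' * (G ω⁻¹)⁻¹ * B' := by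
      simp only [hΦ, ← matInv_eq]
    rw [h3, h4, hMinv]
  -- limits at cocompact
  have hinv0 : Tendsto (fun ω : ℝ => ω⁻¹) (cocompact ℝ) (nhds 0) := by
    rw [tendsto_zero_iff_norm_tendsto_zero]
    refine (tendsto_inv_atTop_zero.comp (tendsto_norm_cocompact_atTop (E := ℝ))).congr fun x => ?_
    simp
  have hne : ∀ᶠ ω : ℝ in cocompact ℝ, ω ≠ 0 := by
    filter_upwards [(isCompact_singleton (x := (0:ℝ))).compl_mem_cocompact] with x hx using hx
  have hTlim : Tendsto (fun ω : ℝ => (ω : ℂ) • F ω) (cocompact ℝ) (nhds (Φ 0)) := by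
    refine Tendsto.congr' ?_ ((hΦc.tendsto).comp hinv0)
    filter_upwards [hne] with ω hω
    exact (key ω hω).symm
  have hcinv : Tendsto (fun ω : ℝ => ((ω : ℂ))⁻¹) (cocompact ℝ) (nhds 0) := by
    have h5 := (Complex.continuous_ofReal.tendsto 0).comp hinv0
    simpa [Function.comp_def, Complex.ofReal_inv] using h5
  have hFlim : Tendsto F (cocompact ℝ) (nhds 0) := by
    have h1 : Tendsto (fun ω : ℝ => ((ω : ℂ))⁻¹ • ((ω : ℂ) • F ω)) (cocompact ℝ)
        (nhds ((0:ℂ) • Φ 0)) := hcinv.smul hTlim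
    rw [zero_smul] at h1
    refine Tendsto.congr' ?_ h1
    filter_upwards [hne] with ω hω
    rw [smul_smul, inv_mul_cancel₀ (Complex.ofReal_ne_zero.mpr hω), one_smul]
  have hmul : Tendsto (fun ω : ℝ => (1 + ω ^ 2) * frobSq (F ω)) (cocompact ℝ)
      (nhds (frobSq (0 : Matrix (Fin p) (Fin m) ℂ) + frobSq (Φ 0))) := by
    have h2 := ((continuous_frobSq.tendsto 0).comp hFlim).add
      ((continuous_frobSq.tendsto (Φ 0)).comp hTlim)
    refine Tendsto.congr (fun ω => ?_) h2
    simp only [Function.comp_apply]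
    rw [frobSq_real_smul]; ring
  have h0 : frobSq (0 : Matrix (Fin p) (Fin m) ℂ) = 0 := by simp [frobSq]
  have hev : ∀ᶠ ω : ℝ in cocompact ℝ, (1 + ω ^ 2) * frobSq (F ω) ≤ frobSq (Φ 0) + 1 := by
    have : frobSq (0 : Matrix (Fin p) (Fin m) ℂ) + frobSq (Φ 0) < frobSq (Φ 0) + 1 := by
      rw [h0]; linarith
    exact (hmul.eventually_lt_const this).mono fun ω h => le_of_lt h
  have hO : (fun ω : ℝ => frobSq (F ω)) =O[cocompact ℝ] fun ω : ℝ => (1 + ω ^ 2)⁻¹ := by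
    rw [isBigO_iff]
    refine ⟨frobSq (Φ 0) + 1, ?_⟩
    filter_upwards [hev] with ω hb
    have hpos : (0:ℝ) < 1 + ω ^ 2 := by positivity
    rw [Real.norm_eq_abs, Real.norm_eq_abs, abs_of_nonneg (frobSq_nonneg _),
      abs_of_nonneg (le_of_lt (inv_pos.mpr hpos)), ← div_eq_mul_inv, le_div_iff₀ hpos, mul_comm]
    exact hb
  exact (hcont.locallyIntegrable).integrable_of_isBigO_cocompact hO
    (integrable_inv_one_add_sq.integrableAtFilter _)

end
end
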